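/- Let m, n be positive integers, let A be the transfer matrix for width m, and let σ_c be the all-covered signature (covered, covered, …, covered). Then the domination polynomial of the m×n grid graph satisfies G_{m×n}(z) = Σ_σ (A^n)_{σ,σ_c}, where the sum runs over all signatures σ of length m that contain no uncovered symbol. -/

import Mathlib

open scoped Classical
open Polynomial

/-- The three possible states of a vertex relative to a vertex subset. -/
inductive VState : Type
  | unc | cov | occ
  deriving DecidableEq

instance : Fintype VState :=
  Fintype.ofList [VState.unc, VState.cov, VState.occ] (by intro x; cases x <;> simp)

/-- `S` is a dominating set of `G`: every vertex is in `S` or adjacent to a vertex of `S`. -/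
def IsDominating {V : Type*} (G : SimpleGraph V) (S : Finset V) : Prop :=
  ∀ v : V, v ∈ S ∨ ∃ u ∈ S, G.Adj u v

/-- The domination polynomial of `G`. -/
noncomputable def domPoly {V : Type*} [Fintype V] (G : SimpleGraph V) : Polynomial ℤ :=
  ∑ S ∈ Finset.univ.filter (fun S : Finset V => IsDominating G S),
    (X : Polynomial ℤ) ^ S.card

/-- The m×n grid graph `P_m □ P_n`; the vertex `(i, j)` lies in column `i` and row `j`. -/
def gridGraph (m n : ℕ) : SimpleGraph (Fin m × Fin n) :=
  (SimpleGraph.pathGraph m).boxProd (SimpleGraph.pathGraph n)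

/-- A signature of length `m`: a string over {unc, cov, occ} with no adjacent
(unc, occ) or (occ, unc) pair. -/
def IsSignature {m : ℕ} (σ : Fin m → VState) : Prop :=
  ∀ i : Fin m, ∀ h : (i : ℕ) + 1 < m,
    ¬(σ i = VState.unc ∧ σ ⟨(i : ℕ) + 1, h⟩ = VState.occ) ∧
    ¬(σ i = VState.occ ∧ σ ⟨(i : ℕ) + 1, h⟩ = VState.unc)

/-- `τ` is compatible with `σ`. -/
def Compatible {m : ℕ} (τ σ : Fin m → VState) : Prop :=
  ∀ i : Fin m,
    (σ i = VState.unc → τ i = VState.occ) ∧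
    (σ i = VState.occ → τ i = VState.cov ∨ τ i = VState.occ) ∧
    (τ i = VState.cov → σ i = VState.occ ∨
      (∃ j : Fin m, (j : ℕ) + 1 = (i : ℕ) ∧ τ j = VState.occ) ∨
      (∃ j : Fin m, (i : ℕ) + 1 = (j : ℕ) ∧ τ j = VState.occ))

/-- The number of occupied symbols of a signature. -/
def occCount {m : ℕ} (σ : Fin m → VState) : ℕ :=
  (Finset.univ.filter fun i => σ i = VState.occ).card

/-- The type of signatures of length `m`. -/
abbrev Signature (m : ℕ) := {σ : Fin m → VState // IsSignature σ}

/-- The transfer matrix for width `m`, over ℤ[z], indexed by signatures of length `m`. -/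
noncomputable def transferMatrix (m : ℕ) :
    Matrix (Signature m) (Signature m) (Polynomial ℤ) :=
  fun τ σ =>
    if Compatible τ.1 σ.1 then (X : Polynomial ℤ) ^ occCount τ.1 else 0

/-- The all-covered signature `(cov, cov, …, cov)`. -/
def allCov (m : ℕ) : Fin m → VState := fun _ => VState.cov

lemma allCov_isSignature (m : ℕ) : IsSignature (allCov m) := by
  intro i h
  constructor <;> rintro ⟨h1, h2⟩ <;> simp [allCov] at h1

/-!
Read a vertex set `S` of the grid column by column: in column `j`, a vertex is occupied if it
lies in `S`, covered if it has a neighbour in `S` among the columns `≤ j`, and uncovered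
otherwise. This is a signature, and when `S` is dominating, the column signatures, preceded by
the all-covered one, form a chain in which each signature is compatible with its predecessor and
the last one has no uncovered symbol. Conversely, every such chain is the chain of exactly one
dominating set, the set of its occupied positions, and `|S|` is the total number of occupied
symbols. Expanding `(A ^ n) σ σ_c` as a sum over paths `σ_c → ⋯ → σ` of products of entries of
`A` therefore gives the domination polynomial.
-/

theorem Matrix.pow_apply_eq_sum_paths {ι R : Type*} [Fintype ι] [DecidableEq ι] [CommSemiring R]
    (A : Matrix ι ι R) (N : ℕ) (i j : ι) :
    (A ^ N) i j = ∑ f : Fin (N + 1) → ι,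
      if f 0 = j ∧ f (Fin.last N) = i then ∏ k : Fin N, A (f k.succ) (f k.castSucc) else 0 := by
  induction N generalizing j with
  | zero =>
    rw [← (Equiv.funUnique (Fin 1) ι).symm.sum_comp]
    simp [ite_and, Matrix.one_apply, eq_comm]
  | succ N ih =>
    rw [pow_succ, Matrix.mul_apply, ← (Fin.consEquiv fun _ => ι).sum_comp]
    simp only [ih, Finset.sum_mul]
    rw [Finset.sum_comm]
    simp [Fin.consEquiv, Fintype.sum_prod_type, ite_and, Fin.prod_univ_succ, mul_comm]

lemma IsSignature.not_unc_and_occ {m : ℕ} {σ : Fin m → VState} (hσ : IsSignature σ)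
    {i i' : Fin m} (h : (i : ℕ) + 1 = i' ∨ (i' : ℕ) + 1 = i) :
    ¬(σ i = VState.unc ∧ σ i' = VState.occ) := by
  rintro ⟨hu, ho⟩
  rcases h with h | h
  · exact (hσ i (h ▸ i'.isLt)).1 ⟨hu, by rwa [show (⟨i + 1, _⟩ : Fin m) = i' from Fin.ext h]⟩
  · exact (hσ i' (h ▸ i.isLt)).2 ⟨ho, by rwa [show (⟨i' + 1, _⟩ : Fin m) = i from Fin.ext h]⟩

def allCovSignature (m : ℕ) : Signature m := ⟨allCov m, allCov_isSignature m⟩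

section Grid

variable {m n : ℕ}

lemma gridGraph_adj {u v : Fin m × Fin n} : (gridGraph m n).Adj u v ↔
    (u.2 = v.2 ∧ ((u.1 : ℕ) + 1 = v.1 ∨ (v.1 : ℕ) + 1 = u.1)) ∨
    (u.1 = v.1 ∧ ((u.2 : ℕ) + 1 = v.2 ∨ (v.2 : ℕ) + 1 = u.2)) := by
  simp [gridGraph, SimpleGraph.boxProd_adj, SimpleGraph.pathGraph_adj, and_comm]

def IsDominatedUpTo (S : Finset (Fin m × Fin n)) (i : Fin m) (j : Fin n) : Prop :=
  (∃ j' : Fin n, (j' : ℕ) + 1 = j ∧ (i, j') ∈ S) ∨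
  (∃ i' : Fin m, (i' : ℕ) + 1 = i ∧ (i', j) ∈ S) ∨
  (∃ i' : Fin m, (i : ℕ) + 1 = i' ∧ (i', j) ∈ S)

lemma exists_mem_gridGraph_adj_iff {S : Finset (Fin m × Fin n)} {i : Fin m} {j : Fin n} :
    (∃ u ∈ S, (gridGraph m n).Adj u (i, j)) ↔
      IsDominatedUpTo S i j ∨ ∃ j' : Fin n, (j : ℕ) + 1 = j' ∧ (i, j') ∈ S := by
  constructor
  · rintro ⟨⟨a, b⟩, hu, hadj⟩
    rcases gridGraph_adj.1 hadj with ⟨rfl, h | h⟩ | ⟨rfl, h | h⟩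
    · exact Or.inl (Or.inr (Or.inl ⟨a, h, hu⟩))
    · exact Or.inl (Or.inr (Or.inr ⟨a, h, hu⟩))
    · exact Or.inl (Or.inl ⟨b, h, hu⟩)
    · exact Or.inr ⟨b, h, hu⟩
  · rintro ((⟨_, h, hu⟩ | ⟨_, h, hu⟩ | ⟨_, h, hu⟩) | ⟨_, h, hu⟩) <;>
      exact ⟨_, hu, gridGraph_adj.2 (by simp [h])⟩

lemma isDominating_gridGraph_iff {S : Finset (Fin m × Fin n)} :
    IsDominating (gridGraph m n) S ↔ ∀ i j, (i, j) ∈ S ∨ IsDominatedUpTo S i j ∨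
      ∃ j' : Fin n, (j : ℕ) + 1 = j' ∧ (i, j') ∈ S := by
  simp only [IsDominating, Prod.forall, exists_mem_gridGraph_adj_iff]

noncomputable def columnState (S : Finset (Fin m × Fin n)) (j : Fin n) : Fin m → VState :=
  fun i => if (i, j) ∈ S then VState.occ
    else if IsDominatedUpTo S i j then VState.cov else VState.unc

variable {S : Finset (Fin m × Fin n)} {i : Fin m} {j : Fin n}

lemma columnState_eq_occ : columnState S j i = VState.occ ↔ (i, j) ∈ S := by
  unfold columnState; split_ifs <;> simp_all

lemma columnState_eq_cov :
    columnState S j i = VState.cov ↔ (i, j) ∉ S ∧ IsDominatedUpTo S i j := by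
  unfold columnState; split_ifs <;> simp_all

lemma columnState_eq_unc :
    columnState S j i = VState.unc ↔ (i, j) ∉ S ∧ ¬IsDominatedUpTo S i j := by
  unfold columnState; split_ifs <;> simp_all

lemma columnState_isSignature (S : Finset (Fin m × Fin n)) (j : Fin n) :
    IsSignature (columnState S j) := by
  refine fun i h => ⟨fun ⟨hu, ho⟩ => ?_, fun ⟨ho, hu⟩ => ?_⟩
  · exact (columnState_eq_unc.1 hu).2 (Or.inr (Or.inr ⟨_, rfl, columnState_eq_occ.1 ho⟩))
  · exact (columnState_eq_unc.1 hu).2 (Or.inr (Or.inl ⟨i, rfl, columnState_eq_occ.1 ho⟩))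

lemma exists_mem_of_columnState_eq_unc (hS : IsDominating (gridGraph m n) S)
    (h : columnState S j i = VState.unc) : ∃ j' : Fin n, (j : ℕ) + 1 = j' ∧ (i, j') ∈ S := by
  rw [columnState_eq_unc] at h
  exact ((isDominating_gridGraph_iff.1 hS i j).resolve_left h.1).resolve_left h.2

lemma compatible_columnState_allCov (hj : (j : ℕ) = 0) :
    Compatible (columnState S j) (allCov m) := by
  refine fun i => ⟨nofun, nofun, fun h => Or.inr ?_⟩
  rcases (columnState_eq_cov.1 h).2 with ⟨_, h, _⟩ | ⟨i', h, hi'⟩ | ⟨i', h, hi'⟩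
  · omega
  · exact Or.inl ⟨i', h, columnState_eq_occ.2 hi'⟩
  · exact Or.inr ⟨i', h, columnState_eq_occ.2 hi'⟩

lemma compatible_columnState_succ (hS : IsDominating (gridGraph m n) S) {j' : Fin n}
    (hj : (j : ℕ) + 1 = j') : Compatible (columnState S j') (columnState S j) := by
  refine fun i => ⟨fun hu => ?_, fun ho => ?_, fun hc => ?_⟩
  · obtain ⟨j'', h, hj''⟩ := exists_mem_of_columnState_eq_unc hS hu
    rwa [columnState_eq_occ, ← Fin.ext (h.symm.trans hj)]
  · have hdom : IsDominatedUpTo S i j' := Or.inl ⟨j, hj, columnState_eq_occ.1 ho⟩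
    by_cases hi : (i, j') ∈ S
    · exact Or.inr (columnState_eq_occ.2 hi)
    · exact Or.inl (columnState_eq_cov.2 ⟨hi, hdom⟩)
  · rcases (columnState_eq_cov.1 hc).2 with ⟨j'', h, hj''⟩ | ⟨i', h, hi'⟩ | ⟨i', h, hi'⟩
    · exact Or.inl (columnState_eq_occ.2 ((Fin.ext (by omega) : j'' = j) ▸ hj''))
    · exact Or.inr (Or.inl ⟨i', h, columnState_eq_occ.2 hi'⟩)
    · exact Or.inr (Or.inr ⟨i', h, columnState_eq_occ.2 hi'⟩)

end Grid

section Chains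

variable {m n : ℕ}

def IsAdmissibleChain (f : Fin (n + 1) → Signature m) : Prop :=
  f 0 = allCovSignature m ∧ (∀ k : Fin n, Compatible (f k.succ).1 (f k.castSucc).1) ∧
    ∀ i, (f (Fin.last n)).1 i ≠ VState.unc

lemma prod_transferMatrix_eq_ite (f : Fin (n + 1) → Signature m) :
    ∏ k : Fin n, transferMatrix m (f k.succ) (f k.castSucc) =
      if ∀ k : Fin n, Compatible (f k.succ).1 (f k.castSucc).1 then
        X ^ ∑ k : Fin n, occCount (f k.succ).1 else 0 := by
  split_ifs with h
  · simp [transferMatrix, h, Finset.prod_pow_eq_pow_sum]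
  · obtain ⟨k, hk⟩ := not_forall.1 h
    exact Finset.prod_eq_zero (Finset.mem_univ k) (if_neg hk)

lemma sum_transferMatrix_pow_apply_eq_sum_admissible :
    ∑ σ ∈ Finset.univ.filter (fun σ : Signature m => ∀ i, σ.1 i ≠ VState.unc),
        (transferMatrix m ^ n) σ (allCovSignature m) =
      ∑ f ∈ Finset.univ.filter (IsAdmissibleChain (m := m) (n := n)),
        X ^ ∑ k : Fin n, occCount (f k.succ).1 := by
  simp only [Matrix.pow_apply_eq_sum_paths, prod_transferMatrix_eq_ite]
  rw [Finset.sum_comm, Finset.sum_filter]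
  refine Finset.sum_congr rfl fun f _ => ?_
  by_cases h0 : f 0 = allCovSignature m
  · simp only [h0, true_and, Finset.sum_ite_eq, Finset.mem_filter, Finset.mem_univ,
      IsAdmissibleChain]
    split_ifs <;> tauto
  · simp [h0, IsAdmissibleChain]

noncomputable def columnChain (S : Finset (Fin m × Fin n)) : Fin (n + 1) → Signature m :=
  Fin.cons (allCovSignature m) fun j => ⟨columnState S j, columnState_isSignature S j⟩

def occupiedSet (f : Fin (n + 1) → Signature m) : Finset (Fin m × Fin n) :=
  Finset.univ.filter fun p => (f p.2.succ).1 p.1 = VState.occ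

lemma mem_occupiedSet {f : Fin (n + 1) → Signature m} {i : Fin m} {j : Fin n} :
    (i, j) ∈ occupiedSet f ↔ (f j.succ).1 i = VState.occ := by
  simp [occupiedSet]

lemma card_occupiedSet (f : Fin (n + 1) → Signature m) :
    (occupiedSet f).card = ∑ k : Fin n, occCount (f k.succ).1 := by
  simp only [occupiedSet, occCount, Finset.card_filter, Fintype.sum_prod_type]
  exact Finset.sum_comm

lemma occupiedSet_columnChain (S : Finset (Fin m × Fin n)) : occupiedSet (columnChain S) = S := by
  ext ⟨i, j⟩
  simp [mem_occupiedSet, columnChain, columnState_eq_occ]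

lemma columnChain_isAdmissibleChain {S : Finset (Fin m × Fin n)}
    (hS : IsDominating (gridGraph m n) S) : IsAdmissibleChain (columnChain S) := by
  refine ⟨rfl, fun k => ?_, fun i => ?_⟩
  · rcases Fin.eq_zero_or_eq_succ k.castSucc with h | ⟨j, h⟩
    · simp only [columnChain, h, Fin.cons_zero, Fin.cons_succ]
      exact compatible_columnState_allCov (by simpa using congrArg Fin.val h)
    · simp only [columnChain, h, Fin.cons_succ]
      exact compatible_columnState_succ hS (by simpa using congrArg Fin.val h.symm)
  · rcases n with _ | n
    · simp [columnChain, allCovSignature, allCov]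
    · intro hu
      simp only [columnChain, ← Fin.succ_last, Fin.cons_succ] at hu
      obtain ⟨j', hj', -⟩ := exists_mem_of_columnState_eq_unc hS hu
      have := j'.isLt
      simp only [Fin.val_last] at hj'
      omega

variable {f : Fin (n + 1) → Signature m}

lemma exists_occ_left_iff (hf0 : f 0 = allCovSignature m) {i : Fin m} {j : Fin n} :
    (∃ j' : Fin n, (j' : ℕ) + 1 = j ∧ (f j'.succ).1 i = VState.occ) ↔
      (f j.castSucc).1 i = VState.occ := by
  rcases Fin.eq_zero_or_eq_succ j.castSucc with h | ⟨j', h⟩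
  · have hj : (j : ℕ) = 0 := by simpa using congrArg Fin.val h
    simp [h, hf0, hj, allCovSignature, allCov]
  · have hj : (j' : ℕ) + 1 = j := by simpa using congrArg Fin.val h.symm
    rw [h]
    exact ⟨fun ⟨j'', h'', ho⟩ => (Fin.ext (by omega) : j'' = j') ▸ ho, fun ho => ⟨j', hj, ho⟩⟩

lemma isDominatedUpTo_occupiedSet_iff (hf0 : f 0 = allCovSignature m) {i : Fin m} {j : Fin n} :
    IsDominatedUpTo (occupiedSet f) i j ↔ (f j.castSucc).1 i = VState.occ ∨
      (∃ i' : Fin m, (i' : ℕ) + 1 = i ∧ (f j.succ).1 i' = VState.occ) ∨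
      (∃ i' : Fin m, (i : ℕ) + 1 = i' ∧ (f j.succ).1 i' = VState.occ) := by
  simp only [IsDominatedUpTo, mem_occupiedSet, exists_occ_left_iff hf0]

lemma columnState_occupiedSet (hf : IsAdmissibleChain f) (j : Fin n) (i : Fin m) :
    columnState (occupiedSet f) j i = (f j.succ).1 i := by
  have hcomp := hf.2.1 j i
  cases hτ : (f j.succ).1 i with
  | unc =>
    refine columnState_eq_unc.2 ⟨by simp [mem_occupiedSet, hτ], ?_⟩
    rw [isDominatedUpTo_occupiedSet_iff hf.1]
    rintro (hσ | ⟨i', h, hi'⟩ | ⟨i', h, hi'⟩)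
    · simpa [hτ] using hcomp.2.1 hσ
    · exact (f j.succ).2.not_unc_and_occ (Or.inr h) ⟨hτ, hi'⟩
    · exact (f j.succ).2.not_unc_and_occ (Or.inl h) ⟨hτ, hi'⟩
  | cov =>
    rw [columnState_eq_cov, isDominatedUpTo_occupiedSet_iff hf.1]
    exact ⟨by simp [mem_occupiedSet, hτ], hcomp.2.2 hτ⟩
  | occ => rwa [columnState_eq_occ, mem_occupiedSet]

lemma columnChain_occupiedSet (hf : IsAdmissibleChain f) : columnChain (occupiedSet f) = f := by
  funext k
  refine Fin.cases hf.1.symm (fun j => ?_) k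
  exact Subtype.ext (funext (columnState_occupiedSet hf j))

lemma isDominating_occupiedSet (hf : IsAdmissibleChain f) :
    IsDominating (gridGraph m n) (occupiedSet f) := by
  refine isDominating_gridGraph_iff.2 fun i j => ?_
  cases h : columnState (occupiedSet f) j i with
  | occ => exact Or.inl (columnState_eq_occ.1 h)
  | cov => exact Or.inr (Or.inl (columnState_eq_cov.1 h).2)
  | unc =>
    rw [columnState_occupiedSet hf] at h
    have hlt : (j : ℕ) + 1 < n := by
      by_contra hge
      exact hf.2.2 i (by rwa [show Fin.last n = j.succ from Fin.ext (by simp; omega)])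
    have hcomp := hf.2.1 ⟨j + 1, hlt⟩ i
    refine Or.inr (Or.inr ⟨⟨j + 1, hlt⟩, rfl, mem_occupiedSet.2 (hcomp.1 ?_)⟩)
    rwa [show Fin.castSucc ⟨j + 1, hlt⟩ = j.succ from rfl]

end Chains

theorem grid_domPoly_eq_transferMatrix_pow_general (m n : ℕ) :
    domPoly (gridGraph m n) =
      ∑ σ ∈ Finset.univ.filter (fun σ : Signature m => ∀ i, σ.1 i ≠ VState.unc),
        (transferMatrix m ^ n) σ ⟨allCov m, allCov_isSignature m⟩ := by
  rw [domPoly, ← allCovSignature, sum_transferMatrix_pow_apply_eq_sum_admissible]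
  refine Finset.sum_nbij' columnChain occupiedSet (fun S hS => ?_) (fun f hf => ?_)
    (fun S _ => occupiedSet_columnChain S) (fun f hf => ?_) (fun S _ => ?_)
  · simpa using columnChain_isAdmissibleChain (Finset.mem_filter.1 hS).2
  · simpa using isDominating_occupiedSet (Finset.mem_filter.1 hf).2
  · exact columnChain_occupiedSet (Finset.mem_filter.1 hf).2
  · rw [← card_occupiedSet, occupiedSet_columnChain]

/-- The domination polynomial of the m×n grid equals
`Σ_σ (A^n)_{σ,σ_c}`, the sum over all signatures `σ` of length `m` with no uncovered
symbol, where `A` is the transfer matrix and `σ_c` is the all-covered signature. -/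
theorem grid_domPoly_eq_transferMatrix_pow (m n : ℕ) (hm : 0 < m) (hn : 0 < n) :
    domPoly (gridGraph m n) =
      ∑ σ ∈ Finset.univ.filter (fun σ : Signature m => ∀ i, σ.1 i ≠ VState.unc),
        (transferMatrix m ^ n) σ ⟨allCov m, allCov_isSignature m⟩ :=
  grid_domPoly_eq_transferMatrix_pow_general m n
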